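/- Let μ be a nonnegative Borel measure on a homogeneous group N with Haar measure m and balls B(n,r) of measure m(B(0,1))r^Q. Define M_{HL}μ(n) = sup_{r>0} μ(B(n,r))/m(B(n,r)) and, for β > 0, Q[μ](n,a) = ∫_N q_a(n₁⁻¹n) dμ(n₁) where q_a(X,Z) = c_β a^{2β}(16a²+8a‖X‖²+d(X,Z)²)^{−Q/2−β}. Then there is a constant C_β > 0 such that for all n₀ ∈ N, C_β M_{HL}μ(n₀) ≤ sup_{a>0} Q[μ](n₀,a). -/

import Mathlib

open MeasureTheory

noncomputable section

abbrev HV (p : ℕ) := EuclideanSpace ℝ (Fin (2 * p))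
abbrev HZ (k : ℕ) := EuclideanSpace ℝ (Fin k)
abbrev HG (p k : ℕ) := HV p × HZ k

/-- The homogeneous norm `d(X,Z) = (‖X‖⁴ + 16‖Z‖²)^{1/2}` on the H-type group. -/
def hnorm {p k : ℕ} (n : HG p k) : ℝ := Real.sqrt (‖n.1‖ ^ 4 + 16 * ‖n.2‖ ^ 2)

/-- The H-type group multiplication determined by the (skew-symmetric) bilinear
bracket `br`: `(X,Z)(X',Z') = (X + X', Z + Z' + ½[X,X'])`. -/
def hmul {p k : ℕ} (br : HV p →L[ℝ] HV p →L[ℝ] HZ k) (m n : HG p k) : HG p k :=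
  (m.1 + n.1, m.2 + n.2 + (2⁻¹ : ℝ) • br m.1 n.1)

/-- Group inverse on the H-type group. -/
def hinv {p k : ℕ} (n : HG p k) : HG p k := (-n.1, -n.2)

/-- The `d`-ball `B(n,r) = {n₁ : d(n⁻¹ n₁) < r}`. -/
def hball {p k : ℕ} (br : HV p →L[ℝ] HV p →L[ℝ] HZ k) (n : HG p k) (r : ℝ) :
    Set (HG p k) :=
  {n₁ | hnorm (hmul br (hinv n) n₁) < r}

/-- The nonisotropic dilation `δ_r(X,Z) = (√r X, r Z)`. -/
def hdil {p k : ℕ} (r : ℝ) (n : HG p k) : HG p k := (Real.sqrt r • n.1, r • n.2)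

/-! On the ball `B(n₀, a)` we have `‖X‖² ≤ d < a` for `(X, Z) = n₁⁻¹ n₀`, so the denominator of
`q_a` is at most `25 a²` and the kernel is at least `c_β 25^{-Q/2-β} a^{-Q}`. Integrating over the
ball gives `Q[μ](n₀, a) ≥ c_β 25^{-Q/2-β} m(B(0,1)) · μ(B(n₀, a)) / m(B(n₀, a))`. -/

/-- The Poisson-type kernel `q_a(X, Z)`. -/
def qKernel {p k : ℕ} (Q β cβ a : ℝ) (n : HG p k) : ℝ :=
  cβ * a ^ (2 * β) * (16 * a ^ 2 + 8 * a * ‖n.1‖ ^ 2 + hnorm n ^ 2) ^ (-(Q / 2 + β))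

section HType

variable {p k : ℕ}

lemma hnorm_nonneg (n : HG p k) : 0 ≤ hnorm n := Real.sqrt_nonneg _

lemma hnorm_hinv (n : HG p k) : hnorm (hinv n) = hnorm n := by
  simp [hnorm, hinv]

lemma sq_norm_fst_le_hnorm (n : HG p k) : ‖n.1‖ ^ 2 ≤ hnorm n :=
  (Real.le_sqrt (by positivity) (by positivity)).2 (by nlinarith [sq_nonneg ‖n.2‖])

lemma hmul_hinv_swap (br : HV p →L[ℝ] HV p →L[ℝ] HZ k) (hskew : ∀ X Y, br X Y = -br Y X)
    (n₀ n₁ : HG p k) : hmul br (hinv n₁) n₀ = hinv (hmul br (hinv n₀) n₁) := by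
  simp only [hmul, hinv, Prod.mk.injEq, map_neg, neg_apply, hskew n₁.1 n₀.1]
  constructor
  · abel
  · module

lemma hnorm_hmul_hinv_lt_of_mem_hball {br : HV p →L[ℝ] HV p →L[ℝ] HZ k}
    (hskew : ∀ X Y, br X Y = -br Y X) {n₀ n₁ : HG p k} {r : ℝ} (h : n₁ ∈ hball br n₀ r) :
    hnorm (hmul br (hinv n₁) n₀) < r := by
  rwa [hmul_hinv_swap br hskew, hnorm_hinv]

lemma measurableSet_hball (br : HV p →L[ℝ] HV p →L[ℝ] HZ k) (n : HG p k) (r : ℝ) :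
    MeasurableSet (hball br n r) := by
  have hcont : Continuous fun n₁ : HG p k => hnorm (hmul br (hinv n) n₁) := by
    unfold hnorm hmul hinv
    fun_prop
  exact (isOpen_lt hcont continuous_const).measurableSet

lemma qKernel_lower_bound {Q β cβ a : ℝ} (hγ : 0 ≤ Q / 2 + β) (hcβ : 0 ≤ cβ) (ha : 0 < a)
    {n : HG p k} (hn : hnorm n < a) :
    cβ * 25 ^ (-(Q / 2 + β)) * a ^ (-Q) ≤ qKernel Q β cβ a n := by
  have hX := sq_norm_fst_le_hnorm n
  have hd := hnorm_nonneg n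
  have hD : 0 < 16 * a ^ 2 + 8 * a * ‖n.1‖ ^ 2 + hnorm n ^ 2 := by positivity
  have hD25 : 16 * a ^ 2 + 8 * a * ‖n.1‖ ^ 2 + hnorm n ^ 2 ≤ 25 * a ^ 2 := by nlinarith
  have hexp : cβ * 25 ^ (-(Q / 2 + β)) * a ^ (-Q) =
      cβ * a ^ (2 * β) * (25 * a ^ 2) ^ (-(Q / 2 + β)) := by
    have hpow : a ^ (-Q) = a ^ (2 * β) * a ^ ((2 : ℕ) * -(Q / 2 + β)) := by
      rw [← Real.rpow_add ha]
      push_cast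
      ring_nf
    rw [Real.mul_rpow (by norm_num) (by positivity), ← Real.rpow_natCast, ← Real.rpow_mul ha.le,
      hpow]
    ring
  rw [hexp, qKernel]
  gcongr cβ * a ^ (2 * β) * ?_
  exact Real.rpow_le_rpow_of_nonpos hD hD25 (by linarith)

lemma ofReal_mul_measure_hball_le_lintegral_qKernel {Q β cβ r : ℝ} (hγ : 0 ≤ Q / 2 + β)
    (hcβ : 0 ≤ cβ) (hr : 0 < r) {br : HV p →L[ℝ] HV p →L[ℝ] HZ k}
    (hskew : ∀ X Y, br X Y = -br Y X) (μ : Measure (HG p k)) (n₀ : HG p k) :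
    ENNReal.ofReal (cβ * 25 ^ (-(Q / 2 + β)) * r ^ (-Q)) * μ (hball br n₀ r) ≤
      ∫⁻ n₁, ENNReal.ofReal (qKernel Q β cβ r (hmul br (hinv n₁) n₀)) ∂μ :=
  calc _ = ∫⁻ _ in hball br n₀ r, ENNReal.ofReal (cβ * 25 ^ (-(Q / 2 + β)) * r ^ (-Q)) ∂μ :=
        (setLIntegral_const _ _).symm
    _ ≤ ∫⁻ n₁ in hball br n₀ r, ENNReal.ofReal (qKernel Q β cβ r (hmul br (hinv n₁) n₀)) ∂μ :=
        setLIntegral_mono' (measurableSet_hball br n₀ r) fun _ hn₁ =>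
          ENNReal.ofReal_le_ofReal <|
            qKernel_lower_bound hγ hcβ hr (hnorm_hmul_hinv_lt_of_mem_hball hskew hn₁)
    _ ≤ _ := setLIntegral_le_lintegral _ _

end HType

lemma ENNReal.ofReal_mul_mul_div_ofReal_mul {c t s : ℝ} (hc : 0 ≤ c) (ht : 0 < t) (hs : 0 < s)
    (x : ENNReal) :
    ENNReal.ofReal (c * t) * (x / ENNReal.ofReal (t * s)) = ENNReal.ofReal (c * s⁻¹) * x := by
  rw [div_eq_mul_inv, ← ENNReal.ofReal_inv_of_pos (by positivity), mul_comm x,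
    ← mul_assoc, ← ENNReal.ofReal_mul (by positivity), mul_inv, mul_assoc c,
    mul_inv_cancel_left₀ ht.ne']

/-- the Hardy–Littlewood maximal function is dominated by the
radial maximal function of the Poisson-type integral `Q[μ]`. -/
theorem stmt8 (p k : ℕ) (Q β cβ : ℝ) (hQ : Q = (p : ℝ) + k) (hβ : 0 < β) (hcβ : 0 < cβ)
    (br : HV p →L[ℝ] HV p →L[ℝ] HZ k) (hskew : ∀ X Y, br X Y = -br Y X)
    (μ : Measure (HG p k))
    (hm : ∀ (n : HG p k) (r : ℝ), 0 < r →
      volume (hball br n r) = volume (hball br 0 1) * ENNReal.ofReal (r ^ Q))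
    (hm0 : 0 < volume (hball br 0 1)) (hm1 : volume (hball br 0 1) < ⊤) :
    ∃ C : ℝ, 0 < C ∧ ∀ n₀ : HG p k,
      ENNReal.ofReal C *
          (⨆ r : {r : ℝ // 0 < r}, μ (hball br n₀ r) / volume (hball br n₀ r))
        ≤ ⨆ a : {a : ℝ // 0 < a},
            ∫⁻ n₁, ENNReal.ofReal (cβ * (a : ℝ) ^ (2 * β) *
              (16 * (a : ℝ) ^ 2 + 8 * (a : ℝ) * ‖(hmul br (hinv n₁) n₀).1‖ ^ 2 +
                hnorm (hmul br (hinv n₁) n₀) ^ 2) ^ (-(Q / 2 + β))) ∂μ := by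
  have hγ : 0 ≤ Q / 2 + β := by rw [hQ]; positivity
  set V := (volume (hball br 0 1)).toReal
  have hV : 0 < V := ENNReal.toReal_pos hm0.ne' hm1.ne
  have hvol : ∀ n r, 0 < r → volume (hball br n r) = ENNReal.ofReal (V * r ^ Q) := by
    intro n r hr
    rw [hm n r hr, ENNReal.ofReal_mul hV.le, ENNReal.ofReal_toReal hm1.ne]
  refine ⟨cβ * 25 ^ (-(Q / 2 + β)) * V, by positivity, fun n₀ => ?_⟩
  rw [ENNReal.mul_iSup]
  refine iSup_le fun ⟨r, hr⟩ => le_iSup_of_le ⟨r, hr⟩ ?_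
  rw [hvol n₀ r hr, ENNReal.ofReal_mul_mul_div_ofReal_mul (by positivity) hV (by positivity),
    ← Real.rpow_neg hr.le]
  exact ofReal_mul_measure_hball_le_lintegral_qKernel hγ hcβ.le hr hskew μ n₀
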